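/- arXiv:2210.10532 — 5 statements merged into one kernel-verified Lean document; each statement's English description precedes it below -/
import Mathlib

section
/- For any α ∈ ℝ^d, the set S₁(α) = {k ∈ ℝ^d : there exist s,w ∈ {1,…,Q} with λ_A^s(k+α) = λ_A^w(k)} either equals all of ℝ^d or has Lebesgue measure zero. -/
open MeasureTheory Polynomial

noncomputable section

/-- Multivariate Laurent polynomials in `d` variables over `ℂ`. -/
abbrev MvL (d : ℕ) : Type := AddMonoidAlgebra ℂ (Fin d →₀ ℤ)

/-- Evaluation of a Laurent polynomial at a point `z ∈ (ℂ^*)^d`. -/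
noncomputable def evalMvL {d : ℕ} (z : Fin d → ℂ) (p : MvL d) : ℂ :=
  Finsupp.sum p.coeff fun n c => c * ∏ j, z j ^ (n j)

/-- Evaluation of an element of `(MvL d)[λ]` at `(z, lam)`. -/
noncomputable def evalP {d : ℕ} (z : Fin d → ℂ) (lam : ℂ) (P : Polynomial (MvL d)) : ℂ :=
  P.sum fun m a => evalMvL z a * lam ^ m

/-- `det (𝒜(z) - λ I)` as a Laurent polynomial in `z` and polynomial in `λ`. -/
noncomputable def detP {d Q : ℕ} (M : Matrix (Fin Q) (Fin Q) (MvL d)) : Polynomial (MvL d) :=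
  Matrix.det (Matrix.of fun i j => Polynomial.C (M i j) - if i = j then Polynomial.X else 0)



/-- The unique Floquet extension: for `u` on the fundamental domain `W = ∏ [0, q j)`,
`extPer q hq z u m` is `ũ(m)` where `ũ(n + q j • e j) = z j * ũ(n)`. -/
noncomputable def extPer {d : ℕ} (q : Fin d → ℕ) (hq : ∀ j, 0 < q j) (z : Fin d → ℂ)
    (u : ((j : Fin d) → Fin (q j)) → ℂ) (m : Fin d → ℤ) : ℂ :=
  (∏ j, z j ^ (m j / (q j : ℤ))) *
    u (fun j => ⟨(m j % (q j : ℤ)).toNat, by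
      have h0 : (0:ℤ) < (q j : ℤ) := by exact_mod_cast hq j
      have h1 : 0 ≤ m j % (q j : ℤ) := Int.emod_nonneg _ h0.ne'
      have h2 : m j % (q j : ℤ) < (q j : ℤ) := Int.emod_lt_of_pos _ h0
      omega⟩)

/-- The Floquet matrix `𝒟_V(z)` of `Δ + V` with boundary condition `u(n + q j e j) = z j u(n)`. -/
noncomputable def DVmat {d : ℕ} (q : Fin d → ℕ) (hq : ∀ j, 0 < q j)
    (V : (Fin d → ℤ) → ℝ) (z : Fin d → ℂ) :
    Matrix ((j : Fin d) → Fin (q j)) ((j : Fin d) → Fin (q j)) ℂ :=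
  Matrix.of fun n n' =>
    (∑ j, (extPer q hq z (Pi.single n' 1) (fun i => ((n i : ℕ) : ℤ) + if i = j then 1 else 0)
        + extPer q hq z (Pi.single n' 1) (fun i => ((n i : ℕ) : ℤ) - if i = j then 1 else 0)))
    + (V (fun i => ((n i : ℕ) : ℤ)) : ℂ) * (if n = n' then (1:ℂ) else 0)

/-- `𝒫_V(z, λ) = det (𝒟_V(z) - λ I)`. -/
noncomputable def PVfun {d : ℕ} (q : Fin d → ℕ) (hq : ∀ j, 0 < q j)
    (V : (Fin d → ℤ) → ℝ) (z : Fin d → ℂ) (lam : ℂ) : ℂ :=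
  Matrix.det (DVmat q hq V z - lam • (1 : Matrix _ _ ℂ))

/-- Discrete Fourier transform of the periodic potential `V`. -/
noncomputable def Vhat {d : ℕ} (q : Fin d → ℕ) (V : (Fin d → ℤ) → ℝ) (m : Fin d → ℤ) : ℂ :=
  (((∏ j, q j : ℕ) : ℂ))⁻¹ * ∑ n : ((j : Fin d) → Fin (q j)),
    (V (fun i => ((n i : ℕ) : ℤ)) : ℂ) *
      Complex.exp (-(2 * (Real.pi : ℂ) * Complex.I) *
        ∑ j, (m j : ℂ) * ((n j : ℕ) : ℂ) / ((q j : ℕ) : ℂ))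

/-- The diagonal matrix `B₀(z)` with entries `∑ j (ρ^j_{n j} z j + (ρ^j_{n j} z j)⁻¹)`. -/
noncomputable def B0mat {d : ℕ} (q : Fin d → ℕ) (z : Fin d → ℂ) :
    Matrix ((j : Fin d) → Fin (q j)) ((j : Fin d) → Fin (q j)) ℂ :=
  Matrix.diagonal fun n => ∑ j,
    (Complex.exp (2 * (Real.pi : ℂ) * Complex.I * ((n j : ℕ) : ℂ) / ((q j : ℕ) : ℂ)) * z j
      + (Complex.exp (2 * (Real.pi : ℂ) * Complex.I * ((n j : ℕ) : ℂ) / ((q j : ℕ) : ℂ)) * z j)⁻¹)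

/-- The matrix `B_V` with entries `V̂(n - n')`. -/
noncomputable def BVmat {d : ℕ} (q : Fin d → ℕ) (V : (Fin d → ℤ) → ℝ) :
    Matrix ((j : Fin d) → Fin (q j)) ((j : Fin d) → Fin (q j)) ℂ :=
  Matrix.of fun n n' => Vhat q V (fun i => ((n i : ℕ) : ℤ) - ((n' i : ℕ) : ℤ))

/-- `h(z, λ) = ∏_{n ∈ W} ((∑ j ρ^j_{n j} z j) - λ)` as a function. -/
noncomputable def hFun {d : ℕ} (q : Fin d → ℕ) (z : Fin d → ℂ) (lam : ℂ) : ℂ :=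
  ∏ n : ((j : Fin d) → Fin (q j)),
    ((∑ j, Complex.exp (2 * (Real.pi : ℂ) * Complex.I * ((n j : ℕ) : ℂ) / ((q j : ℕ) : ℂ)) * z j)
      - lam)

/-- The Laurent monomial `c * z j`. -/
noncomputable def zVar {d : ℕ} (j : Fin d) (c : ℂ) : MvL d :=
  AddMonoidAlgebra.ofCoeff (Finsupp.single (Finsupp.single j (1:ℤ)) c)

/-- `h(z, λ)` as a Laurent polynomial in `z` and polynomial in `λ`. -/
noncomputable def hPoly {d : ℕ} (q : Fin d → ℕ) : Polynomial (MvL d) :=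
  ∏ n : ((j : Fin d) → Fin (q j)),
    (Polynomial.C (∑ j, zVar j
        (Complex.exp (2 * (Real.pi : ℂ) * Complex.I * ((n j : ℕ) : ℂ) / ((q j : ℕ) : ℂ))))
      - Polynomial.X)



end

/-!
The eigenvalues need not be analytic in `k`, but
`k ↦ Res(charpoly A(k+α), charpoly A(k)) = ∏_{s,w} (λ^s(k+α) - λ^w(k))` is: the resultant is a
polynomial in the entries of the two matrices, which are trigonometric polynomials in `k`, so it
can be computed in the ring of real-analytic functions and then evaluated pointwise. Its zero set
is `S₁(α)`, and the zero set of a real-analytic function on `ℝ^d` is everything or Lebesgue-null: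
by Fubini, induction on `d`, and the discreteness of zeros in one variable.
-/

open Set

section

variable {F : Type*} [NormedAddCommGroup F] [NormedSpace ℝ F]

theorem AnalyticOnNhd.countable_zeros {f : ℝ → F} (hf : AnalyticOnNhd ℝ f univ)
    (h : ∃ x, f x ≠ 0) : {x | f x = 0}.Countable := by
  obtain ⟨x₀, hx₀⟩ := h
  have hcod : {x | f x = 0}ᶜ ∈ Filter.codiscrete ℝ :=
    (hf.eqOn_zero_or_eventually_ne_zero_of_preconnected isPreconnected_univ).resolve_left
      fun hzero => hx₀ (hzero (mem_univ x₀))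
  have hdisc := (isClosed_and_discrete_iff.2 (mem_codiscrete.1 hcod)).2
  rw [compl_compl] at hdisc
  have := isDiscrete_iff_discreteTopology.1 hdisc
  exact countable_coe_iff.1 (TopologicalSpace.separableSpace_iff_countable.1 inferInstance)

theorem AnalyticOnNhd.volume_zeros : ∀ {d : ℕ} {f : (Fin d → ℝ) → F},
    AnalyticOnNhd ℝ f univ → (∃ x, f x ≠ 0) → volume {x | f x = 0} = 0
  | 0, f, _, ⟨x₀, hx₀⟩ => by
    simp [Subsingleton.elim _ x₀, hx₀]
  | d + 1, f, hf, ⟨x₀, hx₀⟩ => by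
    let g : ℝ × (Fin d → ℝ) → F := fun p => f (Fin.cons p.1 p.2)
    have hg : AnalyticOnNhd ℝ g univ := fun p _ =>
      (hf _ (mem_univ _)).comp ((Fin.consEquivL ℝ fun _ => ℝ).toContinuousLinearMap.analyticAt p)
    have hslice : ∀ x, (∃ y, g (x, y) ≠ 0) → volume {y | g (x, y) = 0} = 0 := fun x =>
      AnalyticOnNhd.volume_zeros fun y _ =>
        (hg _ (mem_univ _)).comp (analyticAt_const.prod analyticAt_id)
    -- a slice `g (x, ·)` can vanish identically only for `x` in this countable set
    have hline : {x | g (x, Fin.tail x₀) = 0}.Countable :=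
      AnalyticOnNhd.countable_zeros
        (fun x _ => (hg _ (mem_univ _)).comp (analyticAt_id.prod analyticAt_const))
        ⟨x₀ 0, by simpa [g] using hx₀⟩
    have hpreim : (MeasurableEquiv.piFinSuccAbove (fun _ => ℝ) 0).symm ⁻¹' {x | f x = 0} =
        {p | g p = 0} := by
      ext p
      simp [g, MeasurableEquiv.piFinSuccAbove_symm_apply, Fin.consEquiv]
    have hmeas : MeasurableSet {p | g p = 0} :=
      (isClosed_eq (continuousOn_univ.1 hg.continuousOn) continuous_const).measurableSet
    rw [← ((volume_preserving_piFinSuccAbove (fun _ => ℝ) 0).symm).measure_preimage_equiv, hpreim,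
      Measure.volume_eq_prod, Measure.measure_prod_null hmeas]
    filter_upwards [compl_mem_ae_iff.2 (hline.measure_zero volume)] with x hx
    exact hslice x ⟨_, hx⟩

end

theorem Polynomial.resultant_prod_X_sub_C {R ι κ : Type*} [CommRing R] [Nontrivial R]
    [Fintype ι] [Fintype κ] (a : ι → R) (b : κ → R) :
    (∏ i, (X - C (a i))).resultant (∏ j, (X - C (b j))) = ∏ i, ∏ j, (a i - b j) := by
  rw [resultant_prod_left _ _ _ _ (by simp) le_rfl]
  simp only [natDegree_X_sub_C, resultant_X_sub_C_left _ _ _ le_rfl, eval_prod, eval_sub, eval_X,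
    eval_C]

section

variable (E : Type*) [NormedAddCommGroup E] [NormedSpace ℝ E]

def analyticSubring : Subring (E → ℂ) where
  carrier := {f | AnalyticOnNhd ℝ f univ}
  mul_mem' := AnalyticOnNhd.mul
  one_mem' := analyticOnNhd_const
  add_mem' := AnalyticOnNhd.add
  zero_mem' := analyticOnNhd_const
  neg_mem' := AnalyticOnNhd.neg

variable {E}

def analyticSubring.eval (k : E) : analyticSubring E →+* ℂ :=
  (Pi.evalRingHom (fun _ : E => ℂ) k).comp (analyticSubring E).subtype

theorem AnalyticOnNhd.resultant_charpoly {n : Type*} [Fintype n] [DecidableEq n]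
    {M N : E → Matrix n n ℂ} (hM : ∀ i j, AnalyticOnNhd ℝ (fun k => M k i j) univ)
    (hN : ∀ i j, AnalyticOnNhd ℝ (fun k => N k i j) univ) :
    AnalyticOnNhd ℝ (fun k => (M k).charpoly.resultant (N k).charpoly) univ := by
  let M' : Matrix n n (analyticSubring E) := .of fun i j => ⟨_, hM i j⟩
  let N' : Matrix n n (analyticSubring E) := .of fun i j => ⟨_, hN i j⟩
  let r := M'.charpoly.resultant N'.charpoly (Fintype.card n) (Fintype.card n)
  have key : ∀ k, (M k).charpoly.resultant (N k).charpoly = analyticSubring.eval k r := by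
    intro k
    rw [← resultant_map_map, ← Matrix.charpoly_map, ← Matrix.charpoly_map,
      Matrix.charpoly_natDegree_eq_dim, Matrix.charpoly_natDegree_eq_dim]
    rfl
  simp only [key]
  exact r.2

end

theorem analyticOnNhd_evalMvL_exp {d : ℕ} (p : MvL d) :
    AnalyticOnNhd ℝ (fun k : Fin d → ℝ =>
      evalMvL (fun j => Complex.exp (2 * Real.pi * Complex.I * (k j : ℂ))) p) univ := by
  intro k _
  have hexp : ∀ j, AnalyticAt ℝ
      (fun k : Fin d → ℝ => Complex.exp (2 * Real.pi * Complex.I * (k j : ℂ))) k := fun j =>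
    have hcoord := (Complex.ofRealCLM.comp
      (ContinuousLinearMap.proj (R := ℝ) (φ := fun _ : Fin d => ℝ) j)).analyticAt k
    analyticAt_cexp.restrictScalars.comp (analyticAt_const.mul hcoord)
  exact Finset.analyticAt_fun_sum _ fun n _ => analyticAt_const.mul <|
    Finset.analyticAt_fun_prod _ fun j _ => (hexp j).zpow (Complex.exp_ne_zero _)

theorem statement2_general
    {d Q : ℕ}
    (𝒜 : Matrix (Fin Q) (Fin Q) (MvL d))
    (A : (Fin d → ℝ) → Matrix (Fin Q) (Fin Q) ℂ)
    (hA : ∀ k i j, A k i j =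
      evalMvL (fun j' => Complex.exp (2 * (Real.pi : ℂ) * Complex.I * (k j' : ℂ))) (𝒜 i j))
    (μ : Fin Q → (Fin d → ℝ) → ℝ)
    (heig : ∀ k, (A k).charpoly = ∏ s, (Polynomial.X - Polynomial.C ((μ s k : ℝ) : ℂ)))
    (α : Fin d → ℝ) :
    {k : Fin d → ℝ | ∃ s w : Fin Q, μ s (k + α) = μ w k} = Set.univ ∨
      volume {k : Fin d → ℝ | ∃ s w : Fin Q, μ s (k + α) = μ w k} = 0 := by
  have hA_analytic : ∀ i j, AnalyticOnNhd ℝ (fun k => A k i j) univ := fun i j => by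
    simpa only [hA] using analyticOnNhd_evalMvL_exp (𝒜 i j)
  let res : (Fin d → ℝ) → ℂ := fun k => (A (k + α)).charpoly.resultant (A k).charpoly
  have hres : AnalyticOnNhd ℝ res univ :=
    AnalyticOnNhd.resultant_charpoly
      (fun i j k _ => (hA_analytic i j _ (mem_univ _)).comp (analyticAt_id.add analyticAt_const))
      hA_analytic
  have hzero : ∀ k, res k = 0 ↔ ∃ s w, μ s (k + α) = μ w k := fun k => by
    simp only [res]
    rw [heig, heig, resultant_prod_X_sub_C]
    simp only [Finset.prod_eq_zero_iff, Finset.mem_univ, true_and, sub_eq_zero,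
      Complex.ofReal_inj]
  simp_rw [← hzero]
  by_cases h : ∀ k, res k = 0
  · exact Or.inl (eq_univ_of_forall h)
  · exact Or.inr (hres.volume_zeros (not_forall.1 h))

theorem statement2
    {d Q : ℕ} (hd : 0 < d) (hQ : 0 < Q)
    (𝒜 : Matrix (Fin Q) (Fin Q) (MvL d))
    (A : (Fin d → ℝ) → Matrix (Fin Q) (Fin Q) ℂ)
    (hA : ∀ k i j, A k i j =
      evalMvL (fun j' => Complex.exp (2 * (Real.pi : ℂ) * Complex.I * (k j' : ℂ))) (𝒜 i j))
    (hHerm : ∀ k, (A k).IsHermitian)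
    (μ : Fin Q → (Fin d → ℝ) → ℝ)
    (hmono : ∀ k, Monotone fun s => μ s k)
    (heig : ∀ k, (A k).charpoly = ∏ s, (Polynomial.X - Polynomial.C ((μ s k : ℝ) : ℂ)))
    (α : Fin d → ℝ) :
    {k : Fin d → ℝ | ∃ s w : Fin Q, μ s (k + α) = μ w k} = Set.univ ∨
      volume {k : Fin d → ℝ | ∃ s w : Fin Q, μ s (k + α) = μ w k} = 0 :=
  statement2_general 𝒜 A hA μ heig α
end

section
/- For any complex number a ≠ 0 and any ζ = (ζ_1,…,ζ_d) ∈ ℂ^d with |ζ_j| = 1 for j = 1,…,d, one has 𝒫_𝒜(z,λ) ≢ 𝒫_𝒜(ζ⊙z, λ+a); i.e., det(𝒜(z) − λI) and det(𝒜(ζ⊙z) − (λ+a)I) are distinct as Laurent polynomials in z and polynomials in λ. -/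
open MeasureTheory Polynomial

/-!
If `𝒫_𝒜(z, λ) = 𝒫_𝒜(ζ ⊙ z, λ + a)` identically, then `𝒜(z)` and `𝒜(ζ ⊙ z) - a` have the same
characteristic polynomial, so the trace `t = tr 𝒜` (a Laurent polynomial) satisfies
`t(ζ ⊙ z) = t(z) + Q a`. Along the orbit `z = ζ^k` this gives `t(ζ^k) = t(1) + k Q a`, which is
unbounded, whereas on the unit torus a Laurent polynomial is bounded by the sum of the absolute
values of its coefficients.
-/

noncomputable def torusChar {d : ℕ} (z : Fin d → ℂ) (hz : ∀ j, z j ≠ 0) :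
    Multiplicative (Fin d →₀ ℤ) →* ℂ where
  toFun n := ∏ j, z j ^ (n.toAdd j)
  map_one' := by simp
  map_mul' m n := by
    simp only [toAdd_mul, Finsupp.add_apply, zpow_add₀ (hz _), Finset.prod_mul_distrib]

noncomputable def evalMvLRingHom {d : ℕ} (z : Fin d → ℂ) (hz : ∀ j, z j ≠ 0) : MvL d →+* ℂ :=
  (AddMonoidAlgebra.lift ℂ ℂ (Fin d →₀ ℤ) (torusChar z hz)).toRingHom

theorem evalMvLRingHom_apply {d : ℕ} (z : Fin d → ℂ) (hz : ∀ j, z j ≠ 0) (p : MvL d) :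
    evalMvLRingHom z hz p = evalMvL z p := by
  simp only [evalMvLRingHom, AlgHom.toRingHom_eq_coe, RingHom.coe_coe,
    AddMonoidAlgebra.lift_apply, evalMvL, smul_eq_mul]
  rfl

/-- `detP` is built from `𝒜 - λ`, whereas `charpoly` is `det (λ - A)`. -/
theorem evalP_detP {d Q : ℕ} (M : Matrix (Fin Q) (Fin Q) (MvL d)) (z : Fin d → ℂ)
    (hz : ∀ j, z j ≠ 0) (lam : ℂ) :
    evalP z lam (detP M) = (-1) ^ Q * (M.map (evalMvLRingHom z hz)).charpoly.eval lam := by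
  have hP : evalP z lam (detP M) = eval₂RingHom (evalMvLRingHom z hz) lam (detP M) := by
    simp only [evalP, coe_eval₂RingHom, eval₂_eq_sum, evalMvLRingHom_apply]
  have hentries : (eval₂RingHom (evalMvLRingHom z hz) lam).mapMatrix
      (Matrix.of fun i j => C (M i j) - if i = j then X else 0)
        = -(Matrix.scalar (Fin Q) lam - M.map (evalMvLRingHom z hz)) := by
    ext i j
    by_cases h : i = j <;> simp [h, Matrix.map_apply]
  rw [hP, detP, RingHom.map_det, hentries, Matrix.det_neg, Fintype.card_fin,
    Matrix.eval_charpoly]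

theorem trace_eq_add_of_charpoly_eval_eq {R n : Type*} [CommRing R] [IsDomain R] [Infinite R]
    [Fintype n] [DecidableEq n] {A B : Matrix n n R} {a : R}
    (h : ∀ lam, A.charpoly.eval lam = B.charpoly.eval (lam + a)) :
    B.trace = A.trace + Fintype.card n * a := by
  have hcharpoly : A.charpoly = (B - Matrix.scalar n a).charpoly := by
    refine Polynomial.funext fun lam => ?_
    rw [Matrix.charpoly_sub_scalar, eval_comp, h]
    simp
  have htrace : A.trace = (B - Matrix.scalar n a).trace := by
    rw [Matrix.trace_eq_neg_charpoly_nextCoeff, hcharpoly,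
      ← Matrix.trace_eq_neg_charpoly_nextCoeff]
  rw [htrace, Matrix.trace_sub, Matrix.scalar_apply, Matrix.trace_diagonal]
  simp

theorem norm_evalMvL_le {d : ℕ} (z : Fin d → ℂ) (hz : ∀ j, ‖z j‖ = 1) (p : MvL d) :
    ‖evalMvL z p‖ ≤ ∑ n ∈ p.coeff.support, ‖p.coeff n‖ := by
  refine (norm_sum_le _ _).trans (Finset.sum_le_sum fun n _ => ?_)
  simp [norm_prod, hz]

theorem eq_zero_of_forall_norm_le_of_add_const {E : Type*} [NormedAddCommGroup E]
    [NormedSpace ℝ E] {u : ℕ → E} {c : E} {B : ℝ} (hu : ∀ k, u (k + 1) = u k + c)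
    (hB : ∀ k, ‖u k‖ ≤ B) : c = 0 := by
  have hu_eq : ∀ k : ℕ, u k = u 0 + k • c := by
    intro k
    induction k with
    | zero => simp
    | succ k ih => rw [hu, ih, succ_nsmul, add_assoc]
  have hlin : ∀ k : ℕ, k * ‖c‖ ≤ 2 * B := fun k =>
    calc k * ‖c‖ = ‖u k - u 0‖ := by
          rw [hu_eq k, add_sub_cancel_left, RCLike.norm_nsmul ℝ, nsmul_eq_mul]
      _ ≤ ‖u k‖ + ‖u 0‖ := norm_sub_le _ _
      _ ≤ 2 * B := by linarith [hB k, hB 0]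
  by_contra hc
  obtain ⟨k, hk⟩ := exists_nat_gt (2 * B / ‖c‖)
  have hk' : 2 * B < k * ‖c‖ := (div_lt_iff₀ (norm_pos_iff.mpr hc)).mp hk
  linarith [hlin k]

theorem evalMvL_trace_mul_eq_add_of_evalP_detP_eq {d Q : ℕ} {𝒜 : Matrix (Fin Q) (Fin Q) (MvL d)} {a : ℂ}
    {ζ : Fin d → ℂ} (hζ : ∀ j, ζ j ≠ 0)
    (h : ∀ z lam, (∀ j, z j ≠ 0) →
      evalP z lam (detP 𝒜) = evalP (fun j => ζ j * z j) (lam + a) (detP 𝒜))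
    (z : Fin d → ℂ) (hz : ∀ j, z j ≠ 0) :
    evalMvL (fun j => ζ j * z j) 𝒜.trace = evalMvL z 𝒜.trace + Q * a := by
  have hζz : ∀ j, ζ j * z j ≠ 0 := fun j => mul_ne_zero (hζ j) (hz j)
  have key := trace_eq_add_of_charpoly_eval_eq (A := 𝒜.map (evalMvLRingHom z hz))
    (B := 𝒜.map (evalMvLRingHom _ hζz)) (a := a) fun lam => by
      have := h z lam hz
      rwa [evalP_detP _ _ hz, evalP_detP _ _ hζz, mul_right_inj' (by simp)] at this
  rwa [← AddMonoidHom.map_trace, ← AddMonoidHom.map_trace, evalMvLRingHom_apply,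
    evalMvLRingHom_apply, Fintype.card_fin] at key

theorem statement8_general
    {d Q : ℕ} (hQ : 0 < Q)
    (𝒜 : Matrix (Fin Q) (Fin Q) (MvL d))
    (a : ℂ) (ha : a ≠ 0)
    (ζ : Fin d → ℂ) (hζ : ∀ j, ‖ζ j‖ = 1) :
    ∃ (z : Fin d → ℂ) (lam : ℂ), (∀ j, z j ≠ 0) ∧
      evalP z lam (detP 𝒜) ≠ evalP (fun j => ζ j * z j) (lam + a) (detP 𝒜) := by
  by_contra! h
  have hζ0 : ∀ j, ζ j ≠ 0 := fun j => norm_ne_zero_iff.mp (by simp [hζ j])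
  set u : ℕ → ℂ := fun k => evalMvL (fun j => ζ j ^ k) 𝒜.trace
  have hu : ∀ k, u (k + 1) = u k + Q * a := fun k => by
    simpa only [u, pow_succ'] using
      evalMvL_trace_mul_eq_add_of_evalP_detP_eq hζ0 h _ fun j => pow_ne_zero k (hζ0 j)
  have hbound : ∀ k, ‖u k‖ ≤ ∑ n ∈ 𝒜.trace.coeff.support, ‖𝒜.trace.coeff n‖ := fun k =>
    norm_evalMvL_le _ (fun j => by simp [hζ j]) _
  have hQa : (Q : ℂ) * a = 0 := eq_zero_of_forall_norm_le_of_add_const hu hbound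
  exact ha ((mul_eq_zero.mp hQa).resolve_left (Nat.cast_ne_zero.mpr hQ.ne'))

theorem statement8
    {d Q : ℕ} (hd : 0 < d) (hQ : 0 < Q)
    (𝒜 : Matrix (Fin Q) (Fin Q) (MvL d))
    (a : ℂ) (ha : a ≠ 0)
    (ζ : Fin d → ℂ) (hζ : ∀ j, ‖ζ j‖ = 1) :
    ∃ (z : Fin d → ℂ) (lam : ℂ), (∀ j, z j ≠ 0) ∧
      evalP z lam (detP 𝒜) ≠ evalP (fun j => ζ j * z j) (lam + a) (detP 𝒜) :=
  statement8_general hQ 𝒜 a ha ζ hζ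
end

section
/- The spectral band functions of A(k) have no non-trivial periods if and only if both of the following hold: (i) for every α ∈ ℝ^d with α ≠ 0_d mod ℤ^d, the set S₁(α) = {k ∈ ℝ^d : ∃ s,w ∈ {1,…,Q} with λ_A^s(k+α) = λ_A^w(k)} has Lebesgue measure zero; and (ii) the set S₂ = {k ∈ ℝ^d : ∃ distinct s,w ∈ {1,…,Q} with λ_A^s(k) = λ_A^w(k)} has Lebesgue measure zero. -/
open MeasureTheory Polynomial

/-!
The forward direction is a countable union of null sets. Conversely, a shift `α` realising
`λ^s(k + α) = λ^w(k)` on a set of positive measure is integral by (i). Then `A(k + α) = A(k)`, and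
since the ordered eigenvalues are determined by the characteristic polynomial, every band function
is `α`-periodic; so the coincidence set lies in `S₂`, which forces `s = w` by (ii).
-/

open Finset in
theorem Monotone.eq_of_univ_map_eq {α : Type*} [PartialOrder α] {n : ℕ} {a b : Fin n → α}
    (ha : Monotone a) (hb : Monotone b) (h : univ.val.map a = univ.val.map b) : a = b :=
  List.ofFn_injective <| List.Perm.eq_of_sortedLE ha.sortedLE_ofFn hb.sortedLE_ofFn <|
    Multiset.coe_eq_coe.mp (by simpa using h)

open Finset in
theorem Polynomial.roots_fintype_prod_X_sub_C {R ι : Type*} [CommRing R] [IsDomain R] [Fintype ι]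
    (f : ι → R) : (∏ i, (X - C (f i))).roots = univ.val.map f := by
  have h := roots_multiset_prod_X_sub_C (univ.val.map f)
  rw [Multiset.map_map] at h
  exact h

theorem Monotone.eq_of_prod_X_sub_C_eq {n : ℕ} {a b : Fin n → ℝ} (ha : Monotone a)
    (hb : Monotone b) (h : ∏ s, (X - C (a s : ℂ)) = ∏ s, (X - C (b s : ℂ))) : a = b := by
  have hroots := congrArg Polynomial.roots h
  rw [roots_fintype_prod_X_sub_C, roots_fintype_prod_X_sub_C] at hroots
  refine Monotone.eq_of_univ_map_eq ha hb (Multiset.map_injective Complex.ofReal_injective ?_)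
  simpa [Multiset.map_map, Function.comp_def] using hroots

theorem Complex.exp_two_pi_I_mul_add_intCast (x : ℝ) (n : ℤ) :
    exp (2 * Real.pi * I * ((x + n : ℝ) : ℂ)) = exp (2 * Real.pi * I * x) := by
  rw [ofReal_add, mul_add, exp_add, ofReal_intCast, mul_comm _ (n : ℂ), exp_int_mul_two_pi_mul_I,
    mul_one]

theorem bandFunction_add_of_int {d Q : ℕ} {𝒜 : Matrix (Fin Q) (Fin Q) (MvL d)}
    {A : (Fin d → ℝ) → Matrix (Fin Q) (Fin Q) ℂ}
    (hA : ∀ k i j, A k i j =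
      evalMvL (fun j' => Complex.exp (2 * (Real.pi : ℂ) * Complex.I * (k j' : ℂ))) (𝒜 i j))
    {μ : Fin Q → (Fin d → ℝ) → ℝ} (hmono : ∀ k, Monotone fun s => μ s k)
    (heig : ∀ k, (A k).charpoly = ∏ s, (X - C ((μ s k : ℝ) : ℂ)))
    {α : Fin d → ℝ} (hα : ∀ j, ∃ n : ℤ, α j = n) (k : Fin d → ℝ) (s : Fin Q) :
    μ s (k + α) = μ s k := by
  have hAk : A (k + α) = A k := by
    ext i j
    rw [hA, hA]
    congr 2 with j'
    obtain ⟨n, hn⟩ := hα j'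
    rw [Pi.add_apply, hn, Complex.exp_two_pi_I_mul_add_intCast]
  have hchar := (heig (k + α)).symm.trans (hAk ▸ heig k)
  exact congrFun ((hmono _).eq_of_prod_X_sub_C_eq (hmono k) hchar) s

section Periods

variable {ι E β : Type*} [Countable ι] [AddZeroClass E] [MeasurableSpace E] {ν : Measure E}
  {f : ι → E → β} {P : E → Prop}

theorem noNontrivialPeriods_iff (hper : ∀ α, P α → ∀ k s, f s (k + α) = f s k) :
    (∀ α s w, 0 < ν {k | f s (k + α) = f w k} → P α ∧ s = w) ↔
      ((∀ α, ¬ P α → ν {k | ∃ s w, f s (k + α) = f w k} = 0) ∧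
        ν {k | ∃ s w, s ≠ w ∧ f s k = f w k} = 0) := by
  constructor
  · intro H
    refine ⟨fun α hα => ?_, ?_⟩
    · simp only [Set.ofPred_exists, measure_iUnion_null_iff]
      intro s w
      by_contra h
      exact hα (H α s w (pos_iff_ne_zero.mpr h)).1
    · simp only [Set.ofPred_exists, measure_iUnion_null_iff]
      intro s w
      by_contra h
      have hsw : s ≠ w := fun hsw => h (by simp [hsw])
      refine hsw (H 0 s w (pos_iff_ne_zero.mpr fun h0 => h (measure_mono_null ?_ h0))).2
      intro k hk
      simpa using hk.2
  · rintro ⟨hshift, hdiag⟩ α s w hpos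
    have hα : P α := by
      by_contra hα
      refine hpos.ne' (measure_mono_null ?_ (hshift α hα))
      exact fun k hk => ⟨s, w, hk⟩
    refine ⟨hα, ?_⟩
    by_contra hsw
    refine hpos.ne' (measure_mono_null ?_ hdiag)
    exact fun k hk => ⟨s, w, hsw, (hper α hα k s).symm.trans hk⟩

end Periods

theorem statement9_general
    {d Q : ℕ}
    (𝒜 : Matrix (Fin Q) (Fin Q) (MvL d))
    (A : (Fin d → ℝ) → Matrix (Fin Q) (Fin Q) ℂ)
    (hA : ∀ k i j, A k i j =
      evalMvL (fun j' => Complex.exp (2 * (Real.pi : ℂ) * Complex.I * (k j' : ℂ))) (𝒜 i j))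
    (μ : Fin Q → (Fin d → ℝ) → ℝ)
    (hmono : ∀ k, Monotone fun s => μ s k)
    (heig : ∀ k, (A k).charpoly = ∏ s, (Polynomial.X - Polynomial.C ((μ s k : ℝ) : ℂ)))
 :
    (∀ (α : Fin d → ℝ) (s w : Fin Q),
      0 < volume {k : Fin d → ℝ | μ s (k + α) = μ w k} →
      (∀ j, ∃ n : ℤ, α j = n) ∧ s = w)
      ↔ ((∀ α : Fin d → ℝ, (¬ ∀ j, ∃ n : ℤ, α j = n) →
            volume {k : Fin d → ℝ | ∃ s w : Fin Q, μ s (k + α) = μ w k} = 0)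
          ∧ volume {k : Fin d → ℝ | ∃ s w : Fin Q, s ≠ w ∧ μ s k = μ w k} = 0) :=
  noNontrivialPeriods_iff fun _ hα => bandFunction_add_of_int hA hmono heig hα

theorem statement9
    {d Q : ℕ} (hd : 0 < d) (hQ : 0 < Q)
    (𝒜 : Matrix (Fin Q) (Fin Q) (MvL d))
    (A : (Fin d → ℝ) → Matrix (Fin Q) (Fin Q) ℂ)
    (hA : ∀ k i j, A k i j =
      evalMvL (fun j' => Complex.exp (2 * (Real.pi : ℂ) * Complex.I * (k j' : ℂ))) (𝒜 i j))
    (hHerm : ∀ k, (A k).IsHermitian)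
    (μ : Fin Q → (Fin d → ℝ) → ℝ)
    (hmono : ∀ k, Monotone fun s => μ s k)
    (heig : ∀ k, (A k).charpoly = ∏ s, (Polynomial.X - Polynomial.C ((μ s k : ℝ) : ℂ)))
 :
    (∀ (α : Fin d → ℝ) (s w : Fin Q),
      0 < volume {k : Fin d → ℝ | μ s (k + α) = μ w k} →
      (∀ j, ∃ n : ℤ, α j = n) ∧ s = w)
      ↔ ((∀ α : Fin d → ℝ, (¬ ∀ j, ∃ n : ℤ, α j = n) →
            volume {k : Fin d → ℝ | ∃ s w : Fin Q, μ s (k + α) = μ w k} = 0)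
          ∧ volume {k : Fin d → ℝ | ∃ s w : Fin Q, s ≠ w ∧ μ s k = μ w k} = 0) :=
  statement9_general 𝒜 A hA μ hmono heig
end

section
/- Let P̃_V(z,λ) = 𝒫_V(z^q,λ), where z^q = (z_1^{q_1},…,z_d^{q_d}). Then for any ζ = (ζ_1,…,ζ_d) ∈ ℂ^d with |ζ_j| = 1 for j = 1,…,d and (ζ_1^{q_1},…,ζ_d^{q_d}) ≠ 1_d, one has P̃_V(z,λ) ≢ P̃_V(ζ⊙z,λ), where ζ⊙z = (ζ_1z_1,…,ζ_dz_d). -/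
open MeasureTheory Polynomial

/-!
Fix `j₀` with `μ ^ q j₀ ≠ 1`, where `μ = ζ j₀`. The gauge transformation `u ↦ s ^ (n j₀) u`
turns the Floquet matrix with multiplier `s ^ q j₀` in direction `j₀` into
`𝒟_V(z⁰) + (s - 1) A + (s⁻¹ - 1) B`, where `z⁰` has multiplier `1` in direction `j₀` and `A`, `B`
are the hops by `± e j₀`; `A` is then the cyclic shift of the cell, so `A ^ q j₀ = 1`.
For `z = (1, …, u⁻¹, …, 1)` and `λ = μ / u`, multiplying `P̃_V(z, λ) = P̃_V(ζ ⊙ z, λ)` by `u ^ Q`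
gives an identity between polynomials in `u`. At `u = 0` it reads `det (A - μ) = det (μ A - μ)`;
the right side vanishes since `A` fixes constant vectors, the left does not since
`A ^ q j₀ = 1 ≠ μ ^ q j₀`.
-/

open Function
open scoped Matrix

namespace Matrix

variable {ι K : Type*} [Fintype ι] [DecidableEq ι] [Field K]

theorem det_diagonal_mul_mul_diagonal_inv {v : ι → K} (hv : ∀ i, v i ≠ 0) (M : Matrix ι ι K) :
    det (diagonal v * M * diagonal v⁻¹) = det M := by
  rw [det_mul, det_mul, det_diagonal, det_diagonal, mul_right_comm]
  simp only [Pi.inv_apply, Finset.prod_inv_distrib]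
  rw [mul_inv_cancel₀ (Finset.prod_ne_zero_iff.mpr fun i _ => hv i), one_mul]

theorem det_sub_smul_one_ne_zero_of_pow_eq_one {A : Matrix ι ι K} {k : ℕ} (hA : A ^ k = 1)
    {μ : K} (hμ : μ ^ k ≠ 1) : det (A - μ • 1) ≠ 0 := by
  have hfactor := (Commute.smul_right (Commute.one_right A) μ).mul_geom_sum₂ k
  have hscalar : (1 : Matrix ι ι K) - μ ^ k • 1 = (1 - μ ^ k) • 1 := by rw [sub_smul, one_smul]
  rw [hA, _root_.smul_pow, one_pow, hscalar] at hfactor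
  have hdet := congrArg det hfactor
  rw [det_mul, det_smul, det_one, mul_one] at hdet
  exact left_ne_zero_of_mul (hdet ▸ pow_ne_zero _ (sub_ne_zero.mpr hμ.symm))

end Matrix

noncomputable section

namespace Floquet

variable {d : ℕ} (q : Fin d → ℕ) (hq : ∀ j, 0 < q j)

/-- The fundamental domain `W`. -/
abbrev Cell : Type := (j : Fin d) → Fin (q j)

def wrap (m : Fin d → ℤ) : Cell q := fun j =>
  ⟨(m j % (q j : ℤ)).toNat, by
    have h0 : (0 : ℤ) < q j := by exact_mod_cast hq j
    have := Int.emod_lt_of_pos (m j) h0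
    have := Int.emod_nonneg (m j) h0.ne'
    omega⟩

variable {q}

theorem coe_wrap (m : Fin d → ℤ) (j : Fin d) : ((wrap q hq m j : ℕ) : ℤ) = m j % q j :=
  Int.toNat_of_nonneg (Int.emod_nonneg _ (by exact_mod_cast (hq j).ne'))

theorem wrap_eq_wrap {m m' : Fin d → ℤ} (h : ∀ j, m j % q j = m' j % q j) :
    wrap q hq m = wrap q hq m' :=
  funext fun j => Fin.ext <| Int.ofNat_inj.mp <| by rw [coe_wrap, coe_wrap, h]

theorem wrap_coe (n : Cell q) : wrap q hq (fun j => ((n j : ℕ) : ℤ)) = n :=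
  funext fun j => Fin.ext <| Int.ofNat_inj.mp <| by
    rw [coe_wrap, Int.emod_eq_of_lt (by positivity) (by exact_mod_cast (n j).2)]

theorem extPer_eq (z : Fin d → ℂ) (u : Cell q → ℂ) (m : Fin d → ℤ) :
    extPer q hq z u m = (∏ j, z j ^ (m j / q j)) * u (wrap q hq m) :=
  rfl

theorem extPer_smul (z : Fin d → ℂ) (c : ℂ) (u : Cell q → ℂ) (m : Fin d → ℤ) :
    extPer q hq z (c • u) m = c * extPer q hq z u m := by
  simp only [extPer_eq, Pi.smul_apply, smul_eq_mul]
  ring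

/-- Replacing the Floquet multiplier `s ^ q j₀` by `1` is a gauge transformation by `s ^ m j₀`. -/
theorem extPer_update_pow {s : ℂ} (hs : s ≠ 0) (z : Fin d → ℂ) (j₀ : Fin d) (u : Cell q → ℂ)
    (m : Fin d → ℤ) :
    extPer q hq (update z j₀ (s ^ q j₀)) u m =
      s ^ m j₀ * extPer q hq (update z j₀ 1) (fun n => (s ^ (n j₀ : ℕ))⁻¹ * u n) m := by
  have hprod (c : ℂ) : ∏ j, update z j₀ c j ^ (m j / q j) =
      c ^ (m j₀ / q j₀) * ∏ j ∈ Finset.univ.erase j₀, z j ^ (m j / q j) := by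
    rw [← Finset.mul_prod_erase _ _ (Finset.mem_univ j₀), update_self]
    congr 1
    exact Finset.prod_congr rfl fun j hj => by rw [update_of_ne (Finset.ne_of_mem_erase hj)]
  have hsplit : (s ^ q j₀) ^ (m j₀ / q j₀) * s ^ (wrap q hq m j₀ : ℕ) = s ^ m j₀ := by
    rw [← zpow_natCast s (wrap q hq m j₀ : ℕ), coe_wrap, ← zpow_natCast, ← _root_.zpow_mul,
      ← zpow_add₀ hs, Int.mul_ediv_add_emod]
  rw [extPer_eq, extPer_eq, hprod, hprod, _root_.one_zpow, one_mul, ← hsplit]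
  field_simp

variable (q) in
/-- The matrix of `u ↦ ũ(· + ε eⱼ)` on the cell, `ũ` the Floquet extension of `u` with
multipliers `z`. -/
def hop (z : Fin d → ℂ) (j : Fin d) (ε : ℤ) : Matrix (Cell q) (Cell q) ℂ :=
  Matrix.of fun n n' =>
    extPer q hq z (Pi.single n' 1) (fun i => ((n i : ℕ) : ℤ) + if i = j then ε else 0)

theorem DVmat_eq_sum_hop (V : (Fin d → ℤ) → ℝ) (z : Fin d → ℂ) :
    DVmat q hq V z = ∑ j, (hop q hq z j 1 + hop q hq z j (-1)) +
      Matrix.diagonal fun n => (V fun i => ((n i : ℕ) : ℤ) : ℂ) := by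
  ext n n'
  have hsub (j : Fin d) : (fun i => ((n i : ℕ) : ℤ) - if i = j then 1 else 0) =
      fun i => ((n i : ℕ) : ℤ) + if i = j then -1 else 0 := by
    funext i; split_ifs <;> ring
  simp only [DVmat, hop, Matrix.add_apply, Matrix.sum_apply, Matrix.of_apply,
    Matrix.diagonal_apply, hsub, mul_ite, mul_one, mul_zero]

theorem hop_update_pow {s : ℂ} (hs : s ≠ 0) (z : Fin d → ℂ) (j₀ j : Fin d) (ε : ℤ) :
    hop q hq (update z j₀ (s ^ q j₀)) j ε =
      Matrix.diagonal (fun n : Cell q => s ^ (n j₀ : ℕ)) *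
        ((if j = j₀ then s ^ ε else 1) • hop q hq (update z j₀ 1) j ε) *
        Matrix.diagonal (fun n : Cell q => s ^ (n j₀ : ℕ))⁻¹ := by
  ext n n'
  have hsingle : (fun x : Cell q => (s ^ (x j₀ : ℕ))⁻¹ * (Pi.single n' 1 : Cell q → ℂ) x) =
      (s ^ (n' j₀ : ℕ))⁻¹ • (Pi.single n' 1 : Cell q → ℂ) := by
    funext x
    by_cases h : x = n' <;> simp [h]
  rw [Matrix.mul_diagonal, Matrix.diagonal_mul]
  simp only [hop, Matrix.of_apply, Matrix.smul_apply, smul_eq_mul, Pi.inv_apply]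
  rw [extPer_update_pow hq hs, hsingle, extPer_smul, zpow_add₀ hs, zpow_natCast]
  by_cases h : j = j₀
  · subst h; simp only [if_true]; ring
  · simp only [if_neg h, if_neg (Ne.symm h), zpow_zero]; ring

theorem DVmat_update_pow (V : (Fin d → ℤ) → ℝ) {s : ℂ} (hs : s ≠ 0) (z : Fin d → ℂ)
    (j₀ : Fin d) :
    DVmat q hq V (update z j₀ (s ^ q j₀)) =
      Matrix.diagonal (fun n : Cell q => s ^ (n j₀ : ℕ)) *
        (DVmat q hq V (update z j₀ 1) + (s - 1) • hop q hq (update z j₀ 1) j₀ 1 +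
          (s⁻¹ - 1) • hop q hq (update z j₀ 1) j₀ (-1)) *
        Matrix.diagonal (fun n : Cell q => s ^ (n j₀ : ℕ))⁻¹ := by
  rw [DVmat_eq_sum_hop, DVmat_eq_sum_hop]
  simp only [hop_update_pow hq hs]
  set Φ := Matrix.diagonal (fun n : Cell q => s ^ (n j₀ : ℕ))
  set Ψ := Matrix.diagonal (fun n : Cell q => s ^ (n j₀ : ℕ))⁻¹
  set D := Matrix.diagonal fun n : Cell q => (V fun i => ((n i : ℕ) : ℤ) : ℂ)
  set H := hop q hq (update z j₀ 1)
  have hD : D = Φ * D * Ψ := by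
    simp only [Φ, Ψ, D, Matrix.diagonal_mul_diagonal, Pi.inv_apply]
    congr 1
    funext n
    field_simp
  have hterm (j : Fin d) :
      (if j = j₀ then s ^ (1 : ℤ) else 1) • H j 1 +
          (if j = j₀ then s ^ (-1 : ℤ) else 1) • H j (-1) =
        (H j 1 + H j (-1)) + if j = j₀ then (s - 1) • H j 1 + (s⁻¹ - 1) • H j (-1) else 0 := by
    split_ifs
    · rw [zpow_one, zpow_neg_one, sub_smul, sub_smul, one_smul, one_smul]; abel
    · rw [one_smul, one_smul, add_zero]
  calc _ = Φ * (∑ j, ((if j = j₀ then s ^ (1 : ℤ) else 1) • H j 1 +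
          (if j = j₀ then s ^ (-1 : ℤ) else 1) • H j (-1)) + D) * Ψ := by
        rw [Matrix.mul_add, Matrix.add_mul, Finset.mul_sum, Finset.sum_mul, ← hD]
        simp only [Matrix.mul_add, Matrix.add_mul]
    _ = _ := by
        rw [Finset.sum_congr rfl fun j _ => hterm j, Finset.sum_add_distrib, Finset.sum_ite_eq']
        simp only [Finset.mem_univ, if_true]
        congr 2
        abel

/-- `u ^ Q · 𝒫_V(z', μ / u)`, where `z'` is `z` with `z j₀` replaced by `(t / u) ^ q j₀`: clearing
the pole at `u = 0` leaves a polynomial in `u`. -/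
def rescaledDet (V : (Fin d → ℤ) → ℝ) (z : Fin d → ℂ) (j₀ : Fin d) (t μ u : ℂ) : ℂ :=
  Matrix.det (u • DVmat q hq V (update z j₀ 1) + (t - u) • hop q hq (update z j₀ 1) j₀ 1 +
    (t⁻¹ * u ^ 2 - u) • hop q hq (update z j₀ 1) j₀ (-1) - μ • 1)

theorem PVfun_update_eq_rescaledDet (V : (Fin d → ℤ) → ℝ) (z : Fin d → ℂ) (j₀ : Fin d)
    {t u : ℂ} (ht : t ≠ 0) (hu : u ≠ 0) (μ : ℂ) :
    PVfun q hq V (update z j₀ ((t * u⁻¹) ^ q j₀)) (μ * u⁻¹) =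
      u⁻¹ ^ Fintype.card (Cell q) * rescaledDet hq V z j₀ t μ u := by
  have hs : t * u⁻¹ ≠ 0 := mul_ne_zero ht (inv_ne_zero hu)
  set v := fun n : Cell q => (t * u⁻¹) ^ (n j₀ : ℕ)
  have hv (n : Cell q) : v n ≠ 0 := pow_ne_zero _ hs
  have hvv : Matrix.diagonal v * Matrix.diagonal v⁻¹ = 1 := by
    rw [Matrix.diagonal_mul_diagonal, ← Matrix.diagonal_one]
    exact congrArg _ (funext fun n => mul_inv_cancel₀ (hv n))
  unfold PVfun rescaledDet
  rw [DVmat_update_pow hq V hs, ← Matrix.det_smul]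
  set M := DVmat q hq V (update z j₀ 1) + (t * u⁻¹ - 1) • hop q hq (update z j₀ 1) j₀ 1 +
    ((t * u⁻¹)⁻¹ - 1) • hop q hq (update z j₀ 1) j₀ (-1)
  have hconj : Matrix.diagonal v * M * Matrix.diagonal v⁻¹ - (μ * u⁻¹) • 1 =
      Matrix.diagonal v * (M - (μ * u⁻¹) • 1) * Matrix.diagonal v⁻¹ := by
    rw [Matrix.mul_sub, Matrix.sub_mul, Matrix.mul_smul, Matrix.smul_mul, Matrix.mul_one, hvv]
  rw [hconj, Matrix.det_diagonal_mul_mul_diagonal_inv hv]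
  congr 1
  simp only [M]
  match_scalars <;> field_simp

theorem hop_mulVec_of_eq_one {z : Fin d → ℂ} {j : Fin d} (hz : z j = 1) (ε : ℤ)
    (v : Cell q → ℂ) :
    hop q hq z j ε *ᵥ v =
      fun n => v (wrap q hq fun i => ((n i : ℕ) : ℤ) + if i = j then ε else 0) := by
  funext n
  have hprod : ∏ i, z i ^ ((((n i : ℕ) : ℤ) + if i = j then ε else 0) / q i) = 1 := by
    refine Finset.prod_eq_one fun i _ => ?_
    by_cases h : i = j
    · rw [h, hz, one_zpow]
    · rw [if_neg h, add_zero, Int.ediv_eq_zero_of_lt (by positivity)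
        (by exact_mod_cast (n i).2), zpow_zero]
  simp only [Matrix.mulVec, dotProduct, hop, Matrix.of_apply, extPer_eq, hprod, one_mul,
    Pi.single_apply, ite_mul, zero_mul, Finset.sum_ite_eq, Finset.mem_univ, if_true]

theorem hop_pow_mulVec_of_eq_one {z : Fin d → ℂ} {j : Fin d} (hz : z j = 1) (ε : ℤ) (k : ℕ)
    (v : Cell q → ℂ) :
    hop q hq z j ε ^ k *ᵥ v =
      fun n => v (wrap q hq fun i => ((n i : ℕ) : ℤ) + if i = j then k * ε else 0) := by
  induction k with
  | zero =>
    funext n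
    simp only [pow_zero, Matrix.one_mulVec, Nat.cast_zero, zero_mul, ite_self, add_zero,
      wrap_coe]
  | succ k ih =>
    rw [pow_succ', ← Matrix.mulVec_mulVec, ih, hop_mulVec_of_eq_one hq hz]
    funext n
    congr 1
    refine wrap_eq_wrap hq fun i => ?_
    rw [coe_wrap, Int.emod_add_emod]
    split_ifs <;> push_cast <;> ring_nf

theorem hop_pow_eq_one_of_eq_one {z : Fin d → ℂ} {j : Fin d} (hz : z j = 1) :
    hop q hq z j 1 ^ q j = 1 := by
  refine Matrix.mulVec_injective (funext fun v => ?_)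
  rw [hop_pow_mulVec_of_eq_one hq hz, Matrix.one_mulVec]
  funext n
  conv_rhs => rw [← wrap_coe hq n]
  refine congrArg v (wrap_eq_wrap hq fun i => ?_)
  split_ifs with h
  · subst h; rw [mul_one, Int.add_emod_right]
  · rw [add_zero]

theorem det_hop_sub_one_of_eq_one {z : Fin d → ℂ} {j : Fin d} (hz : z j = 1) :
    Matrix.det (hop q hq z j 1 - 1) = 0 := by
  refine Matrix.exists_mulVec_eq_zero_iff.mp ⟨fun _ => 1, fun h => ?_, ?_⟩
  · exact one_ne_zero (congrFun h fun i => ⟨0, hq i⟩)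
  · rw [Matrix.sub_mulVec, hop_mulVec_of_eq_one hq hz, Matrix.one_mulVec, sub_self]

theorem continuous_rescaledDet (V : (Fin d → ℤ) → ℝ) (z : Fin d → ℂ) (j₀ : Fin d) (t μ : ℂ) :
    Continuous (rescaledDet hq V z j₀ t μ) := by
  unfold rescaledDet
  exact Continuous.matrix_det (by fun_prop)

theorem rescaledDet_zero (V : (Fin d → ℤ) → ℝ) (z : Fin d → ℂ) (j₀ : Fin d) (t μ : ℂ) :
    rescaledDet hq V z j₀ t μ 0 = Matrix.det (t • hop q hq (update z j₀ 1) j₀ 1 - μ • 1) := by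
  simp [rescaledDet]

theorem pow_mul_update_one (c : Fin d → ℂ) (j₀ : Fin d) (x : ℂ) :
    (fun j => (c j * update (1 : Fin d → ℂ) j₀ x j) ^ q j) =
      update (fun j => c j ^ q j) j₀ ((c j₀ * x) ^ q j₀) := by
  funext j
  rcases eq_or_ne j j₀ with rfl | h <;> simp [*]

end Floquet

end

open Floquet

theorem statement14_general
    {d : ℕ} (q : Fin d → ℕ) (hq : ∀ j, 0 < q j)
    (V : (Fin d → ℤ) → ℝ)
 :
    ∀ ζ : Fin d → ℂ, (∀ j, ‖ζ j‖ = 1) →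
      (fun j => ζ j ^ q j) ≠ (fun _ => (1 : ℂ)) →
      ∃ (z : Fin d → ℂ) (lam : ℂ), (∀ j, z j ≠ 0) ∧
        PVfun q hq V (fun j => z j ^ q j) lam
          ≠ PVfun q hq V (fun j => (ζ j * z j) ^ q j) lam := by
  intro ζ hζ hne
  obtain ⟨j₀, hj₀⟩ : ∃ j₀, ζ j₀ ^ q j₀ ≠ 1 := not_forall.mp fun h => hne (funext h)
  have hζ₀ : ζ j₀ ≠ 0 := norm_ne_zero_iff.mp (by rw [hζ j₀]; exact one_ne_zero)
  by_contra! hcon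
  have heq : Set.EqOn (rescaledDet hq V 1 j₀ 1 (ζ j₀))
      (rescaledDet hq V (fun j => ζ j ^ q j) j₀ (ζ j₀) (ζ j₀)) {0}ᶜ := by
    intro u (hu : u ≠ 0)
    have h := hcon (update (1 : Fin d → ℂ) j₀ u⁻¹) (ζ j₀ * u⁻¹) fun j => by
      rcases eq_or_ne j j₀ with rfl | h <;> simp [*]
    have h1 : (fun j => update (1 : Fin d → ℂ) j₀ u⁻¹ j ^ q j) =
        update (1 : Fin d → ℂ) j₀ ((1 * u⁻¹) ^ q j₀) := by
      funext j
      rcases eq_or_ne j j₀ with rfl | h <;> simp [*]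
    rw [h1, pow_mul_update_one, PVfun_update_eq_rescaledDet hq V _ j₀ one_ne_zero hu,
      PVfun_update_eq_rescaledDet hq V _ j₀ hζ₀ hu] at h
    exact mul_left_cancel₀ (pow_ne_zero _ (inv_ne_zero hu)) h
  have h0 := congrFun ((continuous_rescaledDet hq V _ j₀ _ _).ext_on
    (dense_compl_singleton 0) (continuous_rescaledDet hq V _ j₀ _ _) heq) 0
  rw [rescaledDet_zero, rescaledDet_zero, one_smul, ← smul_sub, Matrix.det_smul,
    det_hop_sub_one_of_eq_one hq (update_self _ _ _), mul_zero] at h0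
  exact Matrix.det_sub_smul_one_ne_zero_of_pow_eq_one
    (hop_pow_eq_one_of_eq_one hq (update_self _ _ _)) hj₀ h0

theorem statement14
    {d : ℕ} (hd : 0 < d) (q : Fin d → ℕ) (hq : ∀ j, 0 < q j)
    (V : (Fin d → ℤ) → ℝ)
    (hper : ∀ (n : Fin d → ℤ) (j : Fin d),
      V (fun i => n i + if i = j then (q j : ℤ) else 0) = V n)
 :
    ∀ ζ : Fin d → ℂ, (∀ j, ‖ζ j‖ = 1) →
      (fun j => ζ j ^ q j) ≠ (fun _ => (1 : ℂ)) →
      ∃ (z : Fin d → ℂ) (lam : ℂ), (∀ j, z j ≠ 0) ∧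
        PVfun q hq V (fun j => z j ^ q j) lam
          ≠ PVfun q hq V (fun j => (ζ j * z j) ^ q j) lam :=
  statement14_general q hq V
end

section
/- Let h(z,λ) = ∏_{0 ≤ n_j ≤ q_j−1, 1 ≤ j ≤ d} ((Σ_{j=1}^d ρ^j_{n_j} z_j) − λ), where ρ^j_{n_j} = e^{2πi n_j/q_j}. Then for any ζ = (ζ_1,…,ζ_d) ∈ ℂ^d with |ζ_j| = 1 for j = 1,…,d and (ζ_1^{q_1},…,ζ_d^{q_d}) ≠ 1_d, one has h(z,λ) ≢ h(ζ⊙z,λ) as polynomials in (z,λ), where ζ⊙z = (ζ_1z_1,…,ζ_dz_d). -/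
open MeasureTheory Polynomial

/-! Take `j` with `ζ_j ^ q_j ≠ 1`, `z = e_j` and `λ = 1`. The factor of `h(e_j, 1)` indexed by
`n = 0` vanishes, while every factor `ρ^j_{n_j} ζ_j - 1` of `h(ζ ⊙ e_j, 1)` is nonzero, because
`(ρ^j_{n_j} ζ_j) ^ q_j = ζ_j ^ q_j ≠ 1`. -/

open Complex

lemma exp_two_pi_I_mul_div_pow_self {q : ℕ} (hq : q ≠ 0) (n : ℕ) :
    exp (2 * (Real.pi : ℂ) * I * (n : ℂ) / (q : ℂ)) ^ q = 1 := by
  rw [← exp_nat_mul, mul_div_cancel₀ _ (Nat.cast_ne_zero.mpr hq), mul_comm,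
    exp_nat_mul_two_pi_mul_I]

lemma hFun_eq_zero_iff {d : ℕ} (q : Fin d → ℕ) (z : Fin d → ℂ) (lam : ℂ) :
    hFun q z lam = 0 ↔ ∃ n : (j : Fin d) → Fin (q j),
      ∑ j, exp (2 * (Real.pi : ℂ) * I * ((n j : ℕ) : ℂ) / ((q j : ℕ) : ℂ)) * z j = lam := by
  simp only [hFun, Finset.prod_eq_zero_iff, Finset.mem_univ, true_and, sub_eq_zero]

lemma hFun_single_eq_zero_iff {d : ℕ} (q : Fin d → ℕ) (j : Fin d) (w lam : ℂ) :
    hFun q (Pi.single j w) lam = 0 ↔ ∃ n : (j : Fin d) → Fin (q j),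
      exp (2 * (Real.pi : ℂ) * I * ((n j : ℕ) : ℂ) / ((q j : ℕ) : ℂ)) * w = lam := by
  simp only [hFun_eq_zero_iff, Pi.single_apply, mul_ite, mul_zero, Finset.sum_ite_eq',
    Finset.mem_univ, if_true]

lemma hFun_single_self {d : ℕ} {q : Fin d → ℕ} (hq : ∀ j, 0 < q j) (j : Fin d) (w : ℂ) :
    hFun q (Pi.single j w) w = 0 :=
  (hFun_single_eq_zero_iff q j w w).mpr ⟨fun i => ⟨0, hq i⟩, by simp⟩

lemma hFun_single_ne_zero {d : ℕ} {q : Fin d → ℕ} (hq : ∀ j, 0 < q j) {j : Fin d} {w lam : ℂ}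
    (hw : w ^ q j ≠ lam ^ q j) : hFun q (Pi.single j w) lam ≠ 0 := by
  intro h
  obtain ⟨n, hn⟩ := (hFun_single_eq_zero_iff q j w lam).mp h
  apply hw
  simpa [mul_pow, exp_two_pi_I_mul_div_pow_self (hq j).ne'] using congrArg (· ^ q j) hn

theorem statement17_general
    {d : ℕ} (q : Fin d → ℕ) (hq : ∀ j, 0 < q j)
    (ζ : Fin d → ℂ)
    (hζq : (fun j => ζ j ^ q j) ≠ (fun _ => (1 : ℂ))) :
    ∃ (z : Fin d → ℂ) (lam : ℂ),
      hFun q z lam ≠ hFun q (fun j => ζ j * z j) lam := by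
  obtain ⟨j, hj⟩ := Function.ne_iff.mp hζq
  have hζe : (fun i => ζ i * (Pi.single j 1 : Fin d → ℂ) i) = Pi.single j (ζ j) := by
    ext i
    by_cases hi : i = j <;> simp [hi]
  refine ⟨Pi.single j 1, 1, ?_⟩
  rw [hζe, hFun_single_self hq]
  exact (hFun_single_ne_zero hq (by rwa [one_pow])).symm

theorem statement17
    {d : ℕ} (hd : 0 < d) (q : Fin d → ℕ) (hq : ∀ j, 0 < q j)
    (ζ : Fin d → ℂ) (hζ : ∀ j, ‖ζ j‖ = 1)
    (hζq : (fun j => ζ j ^ q j) ≠ (fun _ => (1 : ℂ))) :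
    ∃ (z : Fin d → ℂ) (lam : ℂ),
      hFun q z lam ≠ hFun q (fun j => ζ j * z j) lam :=
  statement17_general q hq ζ hζq
end
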